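/- arXiv:2210.01494 — 4 statements merged into one kernel-verified Lean document; each statement's English description precedes it below -/
import Mathlib

section
/- For fixed t ∈ (0,1), K ∈ ℝ and N > 1, the distortion coefficient θ ↦ τ_{K,N}^{(t)}(θ) := t^{1/N} · σ_{K,N-1}^{(t)}(θ)^{1-1/N} is nondecreasing in θ if K ≥ 0 and nonincreasing in θ if K < 0. -/
open MeasureTheory Metric Set Filter Bornology
open scoped ENNReal NNReal

noncomputable section

/-- The distortion coefficient `σ_{K,N}^{(t)}(θ)`, valued in `ℝ≥0∞` (it is `+∞` when
`N π² ≤ K θ²`). -/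
def sigmaC (K N t θ : ℝ) : ℝ≥0∞ :=
  if K = 0 ∨ θ = 0 then ENNReal.ofReal t
  else if N * Real.pi ^ 2 ≤ K * θ ^ 2 then ⊤
  else if 0 < K then
    ENNReal.ofReal (Real.sin (t * θ * Real.sqrt (K / N)) / Real.sin (θ * Real.sqrt (K / N)))
  else
    ENNReal.ofReal (Real.sinh (t * θ * Real.sqrt (-K / N)) / Real.sinh (θ * Real.sqrt (-K / N)))

/-- The distortion coefficient `τ_{K,N}^{(t)}(θ) = t^{1/N} σ_{K,N-1}^{(t)}(θ)^{1-1/N}`. -/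
def tauC (K N t θ : ℝ) : ℝ≥0∞ :=
  ENNReal.ofReal t ^ (1 / N) * sigmaC K (N - 1) t θ ^ (1 - 1 / N)

/-- Extension of `τ_{K,N}^{(t)}` to extended-real arguments (as needed when the distance
`Θ(A,B)` may be infinite). -/
def tauE (K N t : ℝ) (θ : ℝ≥0∞) : ℝ≥0∞ :=
  if θ = ⊤ then (if K < 0 then 0 else if K = 0 then ENNReal.ofReal t else ⊤)
  else tauC K N t θ.toReal

variable {X : Type*} [MetricSpace X] [MeasurableSpace X] [BorelSpace X]

/-- The support of a measure: points all of whose neighbourhoods have positive measure. -/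
def mspt (μ : Measure X) : Set X := {x : X | ∀ ε > (0:ℝ), 0 < μ (Metric.ball x ε)}

/-- `π` is an admissible transport plan (coupling) between `μ` and `ν`. -/
def IsCoupling (μ ν : Measure X) (π : Measure (X × X)) : Prop :=
  π.map Prod.fst = μ ∧ π.map Prod.snd = ν

/-- The squared 2-Wasserstein distance. -/
def W2sq (μ ν : Measure X) : ℝ≥0∞ :=
  ⨅ (π : Measure (X × X)) (_ : IsCoupling μ ν π), ∫⁻ p, edist p.1 p.2 ^ 2 ∂π

/-- The 2-Wasserstein distance. -/
def W2 (μ ν : Measure X) : ℝ≥0∞ := W2sq μ ν ^ (1 / 2 : ℝ)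

/-- A measure has finite second moment. -/
def FiniteSecondMoment (μ : Measure X) : Prop := ∃ x₀ : X, ∫⁻ x, edist x x₀ ^ 2 ∂μ ≠ ⊤

/-- `μ ∈ P^{ac}(X, 𝔪)`: a probability in `P₂(X)` absolutely continuous w.r.t. `𝔪`. -/
def ProbAC (𝔪 μ : Measure X) : Prop :=
  IsProbabilityMeasure μ ∧ μ ≪ 𝔪 ∧ FiniteSecondMoment μ

/-- A constant-speed geodesic parametrized on `[0,1]`. -/
def IsGeod (γ : ℝ → X) : Prop :=
  ∀ s ∈ Set.Icc (0:ℝ) 1, ∀ t ∈ Set.Icc (0:ℝ) 1,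
    dist (γ s) (γ t) = |s - t| * dist (γ 0) (γ 1)

/-- The evaluation map `e_t`. -/
def et (t : ℝ) : (ℝ → X) → X := fun γ => γ t

/-- The set `M_t(A,B)` of `t`-midpoints between `A` and `B`. -/
def MidSet (t : ℝ) (A B : Set X) : Set X :=
  {z : X | ∃ γ : ℝ → X, IsGeod γ ∧ γ 0 ∈ A ∧ γ 1 ∈ B ∧ γ t = z}

/-- `η` is an optimal geodesic plan between `μ` and `ν`: a probability concentrated on
geodesics, with the correct endpoints, whose endpoint cost realises `W₂²(μ,ν)`. -/
def IsOptGeo (μ ν : Measure X) (η : Measure (ℝ → X)) : Prop :=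
  IsProbabilityMeasure η ∧ η {γ | ¬ IsGeod γ} = 0 ∧
    η.map (et 0) = μ ∧ η.map (et 1) = ν ∧
    ∫⁻ γ, edist (γ 0) (γ 1) ^ 2 ∂η = W2sq μ ν

/-- `Θ(A,B)`: the infimum of distances between `A` and `B` when `K ≥ 0`, the supremum
when `K < 0`. -/
def Theta (K : ℝ) (A B : Set X) : ℝ≥0∞ :=
  if 0 ≤ K then ⨅ x ∈ A, ⨅ y ∈ B, edist x y else ⨆ x ∈ A, ⨆ y ∈ B, edist x y

/-- The normalized restriction `𝔪_A = 𝔪|_A / 𝔪(A)`. -/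
def normRestrict (𝔪 : Measure X) (A : Set X) : Measure X := (𝔪 A)⁻¹ • 𝔪.restrict A

/-- The strong Brunn–Minkowski inequality `SBM(K,N)`. -/
def SBM (K N : ℝ) (𝔪 : Measure X) : Prop :=
  ∀ A B : Set X, MeasurableSet A → MeasurableSet B → A ⊆ mspt 𝔪 → B ⊆ mspt 𝔪 →
    0 < 𝔪 A → 𝔪 A < ⊤ → 0 < 𝔪 B → 𝔪 B < ⊤ →
    ∃ η : Measure (ℝ → X), IsOptGeo (normRestrict 𝔪 A) (normRestrict 𝔪 B) η ∧
      ∀ N' : ℝ, N ≤ N' → ∀ t ∈ Set.Icc (0:ℝ) 1,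
        tauE K N' (1 - t) (Theta K A B) * 𝔪 A ^ (1 / N') +
          tauE K N' t (Theta K A B) * 𝔪 B ^ (1 / N') ≤
        𝔪 (mspt (η.map (et t))) ^ (1 / N')

/-- The Brunn–Minkowski inequality `BM(K,N)` (the measure of the midpoint set is taken in
the sense of the outer measure associated to `𝔪`, which in Lean is the value of `𝔪` on an
arbitrary set). -/
def BM (K N : ℝ) (𝔪 : Measure X) : Prop :=
  ∀ A B : Set X, MeasurableSet A → MeasurableSet B → A.Nonempty → B.Nonempty →
    A ⊆ mspt 𝔪 → B ⊆ mspt 𝔪 →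
    ∀ N' : ℝ, N ≤ N' → ∀ t ∈ Set.Icc (0:ℝ) 1,
      tauE K N' (1 - t) (Theta K A B) * 𝔪 A ^ (1 / N') +
        tauE K N' t (Theta K A B) * 𝔪 B ^ (1 / N') ≤
      𝔪 (MidSet t A B) ^ (1 / N')

/-- A non-branching set of geodesics. -/
def NonBranchingSet (G : Set (ℝ → X)) : Prop :=
  ∀ γ₁ ∈ G, ∀ γ₂ ∈ G, ∀ t ∈ Set.Ioo (0:ℝ) 1,
    (∀ s ∈ Set.Icc (0:ℝ) t, γ₁ s = γ₂ s) → ∀ s ∈ Set.Icc (0:ℝ) 1, γ₁ s = γ₂ s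

/-- Essentially non-branching metric measure space. -/
def EssNonBranching (𝔪 : Measure X) : Prop :=
  ∀ μ₀ μ₁ : Measure X, ProbAC 𝔪 μ₀ → ProbAC 𝔪 μ₁ →
    ∀ η : Measure (ℝ → X), IsOptGeo μ₀ μ₁ η →
      ∃ G : Set (ℝ → X), NonBranchingSet G ∧ (∀ γ ∈ G, IsGeod γ) ∧ η Gᶜ = 0

/-- The (sign-reversed) right-hand side of the `CD(K,N)` inequality:
`TTl = ∫ [τ^{(1-t)}(d(x,y)) ρ₀(x)^{-1/N'} + τ^{(t)}(d(x,y)) ρ₁(y)^{-1/N'}] dπ`,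
so that `E_{N'}(μ_t) ≤ -TTl` reads `TTl ≤ ∫ ρ_t^{1-1/N'} d𝔪`. -/
def TTl (𝔪 : Measure X) (K N' t : ℝ) (π : Measure (X × X)) : ℝ≥0∞ :=
  ∫⁻ p, (tauE K N' (1 - t) (edist p.1 p.2) * ((π.map Prod.fst).rnDeriv 𝔪 p.1) ^ (-(1 / N')) +
          tauE K N' t (edist p.1 p.2) * ((π.map Prod.snd).rnDeriv 𝔪 p.2) ^ (-(1 / N'))) ∂π

/-- The `CD(K,N)` entropy-convexity inequality along some optimal geodesic plan between the
fixed marginals `μ₀, μ₁`. -/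
def CDPair (𝔪 : Measure X) (K N : ℝ) (μ₀ μ₁ : Measure X) : Prop :=
  ∃ η : Measure (ℝ → X), IsOptGeo μ₀ μ₁ η ∧
    (∀ t ∈ Set.Icc (0:ℝ) 1, η.map (et t) ≪ 𝔪) ∧
    ∀ N' : ℝ, N ≤ N' → ∀ t ∈ Set.Icc (0:ℝ) 1,
      TTl 𝔪 K N' t (η.map (fun γ => (γ 0, γ 1))) ≤
        ∫⁻ x, ((η.map (et t)).rnDeriv 𝔪 x) ^ (1 - 1 / N') ∂𝔪

/-- The curvature-dimension condition `CD(K,N)` of Lott–Sturm–Villani. -/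
def CD (K N : ℝ) (𝔪 : Measure X) : Prop :=
  ∀ μ₀ μ₁ : Measure X, ProbAC 𝔪 μ₀ → ProbAC 𝔪 μ₁ → CDPair 𝔪 K N μ₀ μ₁

/-- The `N`-Rényi entropy `E_N(μ) = -∫ ρ^{1-1/N} d𝔪`, where `ρ` is the density of the
absolutely continuous part of `μ` w.r.t. `𝔪`. -/
def Ent (𝔪 : Measure X) (N : ℝ) (μ : Measure X) : ℝ :=
  - ∫ x, (μ.rnDeriv 𝔪 x).toReal ^ (1 - 1 / N) ∂𝔪

/-- A step measure: a finite combination of normalized restrictions of `𝔪` to disjoint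
Borel sets of positive finite measure. -/
def IsStepMeasure (𝔪 μ : Measure X) : Prop :=
  ∃ (n : ℕ) (A : Fin n → Set X) (lam : Fin n → ℝ≥0∞),
    (∀ i, MeasurableSet (A i)) ∧ Pairwise (Function.onFun Disjoint A) ∧
    (∀ i, 0 < 𝔪 (A i) ∧ 𝔪 (A i) < ⊤) ∧
    μ = ∑ i, lam i • normRestrict 𝔪 (A i)

/-- A bounded probability measure: absolutely continuous, with bounded support and density
bounded above and below away from zero on it. -/
def IsBoundedProb (𝔪 μ : Measure X) : Prop :=
  ProbAC 𝔪 μ ∧ ∃ (S : Set X) (c C : ℝ), IsBounded S ∧ 0 < c ∧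
    μ Sᶜ = 0 ∧ ∀ᵐ x ∂𝔪.restrict S,
      c ≤ (μ.rnDeriv 𝔪 x).toReal ∧ (μ.rnDeriv 𝔪 x).toReal ≤ C

/-- `𝔪` is qualitatively non-degenerate. -/
def QND (𝔪 : Measure X) : Prop :=
  ∀ R > (0:ℝ), ∀ xb : X, ∃ f : ℝ → ℝ,
    (∀ t ∈ Set.Ioo (0:ℝ) 1, 0 < f t) ∧
    (1/2 : ℝ) < Filter.limsup f (nhdsWithin 0 (Set.Ioi 0)) ∧
    ∀ t ∈ Set.Ioo (0:ℝ) 1, ∀ x ∈ Metric.ball xb R, ∀ A : Set X,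
      MeasurableSet A → A ⊆ Metric.ball xb R →
      ENNReal.ofReal (f t) * 𝔪 A ≤ 𝔪 (MidSet t A {x})

/-- The measure contraction property `MCP(K,N)`. -/
def MCP (K N : ℝ) (𝔪 : Measure X) : Prop :=
  ∀ x ∈ mspt 𝔪, ∀ A : Set X, MeasurableSet A → 0 < 𝔪 A → 𝔪 A < ⊤ →
    ∃ η : Measure (ℝ → X), IsOptGeo (Measure.dirac x) (normRestrict 𝔪 A) η ∧
      ∀ t ∈ Set.Icc (0:ℝ) 1, ∀ S : Set X, MeasurableSet S →
        ∫⁻ γ in (et t) ⁻¹' S, tauE K N t (edist (γ 0) (γ 1)) ^ (N : ℝ) ∂η ≤ (𝔪 A)⁻¹ * 𝔪 S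

/-!
For `K ≠ 0`, `σ_{K,N}^{(t)}(θ)` depends only on `θ √(|K|/N)` and the sign of `K` (for `K = 0` it is
constant), so it suffices to treat `u ↦ sin (t u) / sin u` on `(0, π)` and `u ↦ sinh (t u) / sinh u`
on `(0, ∞)`. The numerator of the derivative of the first, `t cos (t u) sin u - sin (t u) cos u`, vanishes at `0` and has derivative
`(1 - t²) sin (t u) sin u ≥ 0`; the hyperbolic case is the same with the signs reversed. At `θ = 0`
the value `t` is compared with these ratios through `t sin u ≤ sin (t u)` (concavity of `sin`) and
`sinh (t u) ≤ t sinh u`. Finally `τ` is monotone in `σ` because `1 - 1/N ≥ 0`.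
-/

namespace Real

lemma mul_sin_le_sin_mul {t x : ℝ} (ht : t ∈ Icc (0 : ℝ) 1) (hx : x ∈ Icc 0 π) :
    t * sin x ≤ sin (t * x) := by
  simpa using strictConcaveOn_sin_Icc.concaveOn.2 hx ⟨le_rfl, pi_pos.le⟩ ht.1 (sub_nonneg.2 ht.2)
    (add_sub_cancel t 1)

lemma sinh_mul_le_mul_sinh {t x : ℝ} (ht : t ∈ Icc (0 : ℝ) 1) (hx : 0 ≤ x) :
    sinh (t * x) ≤ t * sinh x := by
  have hmono : MonotoneOn (fun y => t * sinh y - sinh (t * y)) (Ici 0) := by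
    refine monotoneOn_of_hasDerivWithinAt_nonneg (convex_Ici 0) (by fun_prop)
      (fun y _ => (((hasDerivAt_sinh y).const_mul t).sub
        ((hasDerivAt_id' y).const_mul t).sinh).hasDerivWithinAt) fun y hy => ?_
    rw [interior_Ici] at hy
    have hcosh : cosh (t * y) ≤ cosh y := by
      rw [cosh_le_cosh, abs_of_nonneg (mul_nonneg ht.1 hy.le), abs_of_nonneg hy.le]
      exact mul_le_of_le_one_left hy.le ht.2
    nlinarith [ht.1]
  simpa using hmono self_mem_Ici hx hx

lemma sin_mul_mul_cos_le {t x : ℝ} (ht : t ∈ Icc (0 : ℝ) 1) (hx : x ∈ Icc 0 π) :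
    sin (t * x) * cos x ≤ t * cos (t * x) * sin x := by
  have hmono : MonotoneOn (fun y => t * cos (t * y) * sin y - sin (t * y) * cos y) (Icc 0 π) := by
    refine monotoneOn_of_hasDerivWithinAt_nonneg (f' := fun y => (1 - t ^ 2) * sin (t * y) * sin y)
      (convex_Icc 0 π) (by fun_prop) (fun y _ => ?_) fun y hy => ?_
    · have := ((((hasDerivAt_id' y).const_mul t).cos.const_mul t).mul (hasDerivAt_sin y)).sub
        (((hasDerivAt_id' y).const_mul t).sin.mul (hasDerivAt_cos y))
      exact (this.congr_deriv (by ring)).hasDerivWithinAt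
    · rw [interior_Icc] at hy
      have hty : t * y ≤ π := le_trans (mul_le_of_le_one_left hy.1.le ht.2) hy.2.le
      have := sin_nonneg_of_nonneg_of_le_pi (mul_nonneg ht.1 hy.1.le) hty
      have := sin_nonneg_of_nonneg_of_le_pi hy.1.le hy.2.le
      have : 0 ≤ 1 - t ^ 2 := by nlinarith [ht.1, ht.2]
      positivity
  simpa using hmono (left_mem_Icc.2 pi_pos.le) hx hx.1

lemma mul_cosh_mul_mul_sinh_le {t x : ℝ} (ht : t ∈ Icc (0 : ℝ) 1) (hx : 0 ≤ x) :
    t * cosh (t * x) * sinh x ≤ sinh (t * x) * cosh x := by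
  have hanti : AntitoneOn (fun y => t * cosh (t * y) * sinh y - sinh (t * y) * cosh y) (Ici 0) := by
    refine antitoneOn_of_hasDerivWithinAt_nonpos (f' := fun y => (t ^ 2 - 1) * sinh (t * y) * sinh y)
      (convex_Ici 0) (by fun_prop) (fun y _ => ?_) fun y hy => ?_
    · have := ((((hasDerivAt_id' y).const_mul t).cosh.const_mul t).mul (hasDerivAt_sinh y)).sub
        (((hasDerivAt_id' y).const_mul t).sinh.mul (hasDerivAt_cosh y))
      exact (this.congr_deriv (by ring)).hasDerivWithinAt
    · rw [interior_Ici] at hy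
      have := sinh_nonneg_iff.2 (mul_nonneg ht.1 hy.le)
      have := sinh_nonneg_iff.2 hy.le
      have : t ^ 2 - 1 ≤ 0 := by nlinarith [ht.1, ht.2]
      exact mul_nonpos_of_nonpos_of_nonneg (mul_nonpos_of_nonpos_of_nonneg this ‹_›) ‹_›
  simpa using hanti self_mem_Ici hx hx

lemma monotoneOn_sin_mul_div_sin {t : ℝ} (ht : t ∈ Icc (0 : ℝ) 1) :
    MonotoneOn (fun x => sin (t * x) / sin x) (Ioo 0 π) := by
  have hsin : ∀ x ∈ Ioo 0 π, sin x ≠ 0 := fun x hx => (sin_pos_of_pos_of_lt_pi hx.1 hx.2).ne'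
  refine monotoneOn_of_hasDerivWithinAt_nonneg
    (f' := fun x => (t * cos (t * x) * sin x - sin (t * x) * cos x) / sin x ^ 2) (convex_Ioo 0 π) ((by fun_prop : Continuous
    fun x => sin (t * x)).continuousOn.div continuous_sin.continuousOn hsin) (fun x hx => ?_)
    fun x hx => ?_
  · rw [interior_Ioo] at hx
    exact ((((hasDerivAt_id' x).const_mul t).sin.div (hasDerivAt_sin x) (hsin x hx)).congr_deriv
      (by ring)).hasDerivWithinAt
  · rw [interior_Ioo] at hx
    exact div_nonneg (sub_nonneg.2 (sin_mul_mul_cos_le ht (Ioo_subset_Icc_self hx))) (sq_nonneg _)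

lemma antitoneOn_sinh_mul_div_sinh {t : ℝ} (ht : t ∈ Icc (0 : ℝ) 1) :
    AntitoneOn (fun x => sinh (t * x) / sinh x) (Ioi 0) := by
  have hsinh : ∀ x ∈ Ioi (0 : ℝ), sinh x ≠ 0 := fun x hx => (sinh_pos_iff.2 hx).ne'
  refine antitoneOn_of_hasDerivWithinAt_nonpos
    (f' := fun x => (t * cosh (t * x) * sinh x - sinh (t * x) * cosh x) / sinh x ^ 2) (convex_Ioi 0) ((by fun_prop : Continuous
    fun x => sinh (t * x)).continuousOn.div continuous_sinh.continuousOn hsinh) (fun x hx => ?_)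
    fun x hx => ?_
  · rw [interior_Ioi] at hx
    exact ((((hasDerivAt_id' x).const_mul t).sinh.div (hasDerivAt_sinh x) (hsinh x hx)).congr_deriv
      (by ring)).hasDerivWithinAt
  · rw [interior_Ioi] at hx
    exact div_nonpos_of_nonpos_of_nonneg (sub_nonpos.2 (mul_cosh_mul_mul_sinh_le ht hx.le))
      (sq_nonneg _)

end Real

section DistortionCoefficients

open Real

lemma sigmaC_zero (K N t : ℝ) : sigmaC K N t 0 = ENNReal.ofReal t := by
  simp [sigmaC]

lemma sigmaC_eq_sigmaC_one_one {K N : ℝ} (hK : 0 < K) (hN : 0 < N) (t θ : ℝ) :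
    sigmaC K N t θ = sigmaC 1 1 t (θ * √(K / N)) := by
  have ha : 0 < √(K / N) := sqrt_pos.2 (div_pos hK hN)
  have hcond : N * π ^ 2 ≤ K * θ ^ 2 ↔ π ^ 2 ≤ (θ * √(K / N)) ^ 2 := by
    rw [mul_pow, sq_sqrt (div_pos hK hN).le, ← mul_le_mul_iff_right₀ hN]
    field_simp
  simp only [sigmaC, hK.ne', one_ne_zero, false_or, mul_eq_zero, ha.ne', or_false, one_mul,
    div_one, sqrt_one, mul_one, hcond, hK, zero_lt_one, if_true, mul_assoc]

lemma sigmaC_eq_sigmaC_neg_one_one {K N : ℝ} (hK : K < 0) (hN : 0 < N) (t θ : ℝ) :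
    sigmaC K N t θ = sigmaC (-1) 1 t (θ * √(-K / N)) := by
  have hb : 0 < √(-K / N) := sqrt_pos.2 (div_pos (neg_pos.2 hK) hN)
  have hcond : ¬ N * π ^ 2 ≤ K * θ ^ 2 := by
    have := mul_nonpos_of_nonpos_of_nonneg hK.le (sq_nonneg θ)
    have := mul_pos hN (pow_pos pi_pos 2)
    linarith
  have hcond' : ¬ 1 * π ^ 2 ≤ -1 * (θ * √(-K / N)) ^ 2 := by
    have := pow_pos pi_pos 2
    nlinarith [sq_nonneg (θ * √(-K / N))]
  simp only [sigmaC, hK.ne, neg_eq_zero, one_ne_zero, false_or, mul_eq_zero, hb.ne', or_false,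
    hcond, hcond', if_false, not_lt.2 hK.le, (by norm_num : ¬ (0 : ℝ) < -1), neg_neg, div_one,
    sqrt_one, mul_one, mul_assoc]

lemma sigmaC_one_one_of_pi_le {t u : ℝ} (hu : π ≤ u) : sigmaC 1 1 t u = ⊤ := by
  have hπu : π ^ 2 ≤ u ^ 2 := pow_le_pow_left₀ pi_pos.le hu 2
  simp [sigmaC, (pi_pos.trans_le hu).ne', hπu]

lemma sigmaC_one_one_of_mem_Ioo {t u : ℝ} (hu : u ∈ Ioo 0 π) :
    sigmaC 1 1 t u = ENNReal.ofReal (sin (t * u) / sin u) := by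
  have hπu : ¬ π ^ 2 ≤ u ^ 2 := not_le.2 (pow_lt_pow_left₀ hu.2 hu.1.le two_ne_zero)
  simp [sigmaC, hu.1.ne', hπu]

lemma sigmaC_neg_one_one_of_ne_zero {t u : ℝ} (hu : u ≠ 0) :
    sigmaC (-1) 1 t u = ENNReal.ofReal (sinh (t * u) / sinh u) := by
  have hu' : ¬ π ^ 2 ≤ -u ^ 2 := by nlinarith [pow_pos pi_pos 2, sq_nonneg u]
  simp [sigmaC, hu, hu']

lemma monotoneOn_sigmaC_one_one {t : ℝ} (ht : t ∈ Icc (0 : ℝ) 1) :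
    MonotoneOn (sigmaC 1 1 t) (Ici 0) := by
  intro x hx y hy hxy
  rcases le_or_gt π y with hπy | hyπ
  · simp [sigmaC_one_one_of_pi_le hπy]
  rcases (mem_Ici.1 hx).eq_or_lt with rfl | hx₀
  · rcases (mem_Ici.1 hy).eq_or_lt with rfl | hy₀
    · exact le_rfl
    rw [sigmaC_zero, sigmaC_one_one_of_mem_Ioo ⟨hy₀, hyπ⟩]
    refine ENNReal.ofReal_le_ofReal ((le_div_iff₀ (sin_pos_of_pos_of_lt_pi hy₀ hyπ)).2 ?_)
    exact mul_sin_le_sin_mul ht ⟨hy₀.le, hyπ.le⟩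
  rw [sigmaC_one_one_of_mem_Ioo ⟨hx₀, hxy.trans_lt hyπ⟩,
    sigmaC_one_one_of_mem_Ioo ⟨hx₀.trans_le hxy, hyπ⟩]
  exact ENNReal.ofReal_le_ofReal
    (monotoneOn_sin_mul_div_sin ht ⟨hx₀, hxy.trans_lt hyπ⟩ ⟨hx₀.trans_le hxy, hyπ⟩ hxy)

lemma antitoneOn_sigmaC_neg_one_one {t : ℝ} (ht : t ∈ Icc (0 : ℝ) 1) :
    AntitoneOn (sigmaC (-1) 1 t) (Ici 0) := by
  intro x hx y hy hxy
  rcases (mem_Ici.1 hx).eq_or_lt with rfl | hx₀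
  · rcases (mem_Ici.1 hy).eq_or_lt with rfl | hy₀
    · exact le_rfl
    rw [sigmaC_zero, sigmaC_neg_one_one_of_ne_zero hy₀.ne']
    exact ENNReal.ofReal_le_ofReal ((div_le_iff₀ (sinh_pos_iff.2 hy₀)).2 (sinh_mul_le_mul_sinh ht hy₀.le))
  rw [sigmaC_neg_one_one_of_ne_zero hx₀.ne', sigmaC_neg_one_one_of_ne_zero (hx₀.trans_le hxy).ne']
  exact ENNReal.ofReal_le_ofReal
    (antitoneOn_sinh_mul_div_sinh ht (mem_Ioi.2 hx₀) (mem_Ioi.2 (hx₀.trans_le hxy)) hxy)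

lemma monotoneOn_sigmaC {K N t : ℝ} (hK : 0 ≤ K) (hN : 0 < N) (ht : t ∈ Icc (0 : ℝ) 1) :
    MonotoneOn (sigmaC K N t) (Ici 0) := by
  rcases hK.eq_or_lt with rfl | hK
  · have hconst : sigmaC 0 N t = fun _ => ENNReal.ofReal t := funext fun θ => by simp [sigmaC]
    exact hconst ▸ monotoneOn_const
  have hscale : MonotoneOn (fun θ : ℝ => θ * √(K / N)) (Ici 0) :=
    (monotone_id.mul_const (sqrt_nonneg _)).monotoneOn _
  rw [funext (sigmaC_eq_sigmaC_one_one hK hN t)]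
  exact (monotoneOn_sigmaC_one_one ht).comp hscale fun θ hθ => mul_nonneg hθ (sqrt_nonneg _)

lemma antitoneOn_sigmaC {K N t : ℝ} (hK : K < 0) (hN : 0 < N) (ht : t ∈ Icc (0 : ℝ) 1) :
    AntitoneOn (sigmaC K N t) (Ici 0) := by
  have hscale : MonotoneOn (fun θ : ℝ => θ * √(-K / N)) (Ici 0) :=
    (monotone_id.mul_const (sqrt_nonneg _)).monotoneOn _
  rw [funext (sigmaC_eq_sigmaC_neg_one_one hK hN t)]
  exact (antitoneOn_sigmaC_neg_one_one ht).comp_MonotoneOn hscale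
    fun θ hθ => mul_nonneg hθ (sqrt_nonneg _)

lemma tauC_le_tauC {K N t θ θ' : ℝ} (hN : 1 ≤ N)
    (h : sigmaC K (N - 1) t θ ≤ sigmaC K (N - 1) t θ') : tauC K N t θ ≤ tauC K N t θ' := by
  have hexp : 0 ≤ 1 - 1 / N := sub_nonneg.2 ((div_le_one (by linarith)).2 hN)
  exact mul_le_mul_right (ENNReal.rpow_le_rpow h hexp) _

end DistortionCoefficients

/-- for fixed `t ∈ (0,1)`, `K ∈ ℝ`, `N > 1`, the map `θ ↦ τ_{K,N}^{(t)}(θ)`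
is nondecreasing on `[0,∞)` if `K ≥ 0` and nonincreasing if `K < 0`. -/
theorem stmt0 (K N t : ℝ) (hN : 1 < N) (ht : t ∈ Set.Ioo (0:ℝ) 1) :
    (0 ≤ K → MonotoneOn (fun θ : ℝ => tauC K N t θ) (Set.Ici (0:ℝ))) ∧
    (K < 0 → AntitoneOn (fun θ : ℝ => tauC K N t θ) (Set.Ici (0:ℝ))) := by
  have hN₁ : 0 < N - 1 := sub_pos.2 hN
  have ht' : t ∈ Icc (0 : ℝ) 1 := Ioo_subset_Icc_self ht
  exact ⟨fun hK _ hx _ hy hxy => tauC_le_tauC hN.le (monotoneOn_sigmaC hK hN₁ ht' hx hy hxy),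
    fun hK _ hx _ hy hxy => tauC_le_tauC hN.le (antitoneOn_sigmaC hK hN₁ ht' hx hy hxy)⟩

end
end

section
/- Let (X,d) be a proper metric space, A ⊂ X compact and x ∈ X. Then the intersection over all r > 0 of the midpoint sets M_t(A, B_r(x)) equals M_t(A, x), i.e. ⋂_{r>0} M_t(A, B_r(x)) = M_t(A, {x}) for every t ∈ [0,1]. -/
open MeasureTheory Metric Set Filter Bornology
open scoped ENNReal NNReal

noncomputable section

variable {X : Type*} [MetricSpace X] [MeasurableSpace X] [BorelSpace X]

/-!
A point `z` of `⋂ r, M_t(A, B_r(x))` lies, for each `r`, on a geodesic from `A` to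
`closedBall x r` that passes through `z` at time `t`. Making such a geodesic constant outside
`[0,1]` keeps it a geodesic and puts all its values in `closedBall x (R + 2r)`, where
`A ⊆ closedBall x R`. Since `X` is proper, these geodesics form nonempty closed subsets of a
compact product `∏_{s : ℝ} closedBall x (R + 2r)` (Tychonoff), decreasing as `r ↓ 0`. A point
of their intersection is a geodesic from `A` to `x` through `z`.
-/

def iccExtendUnit {β : Type*} (γ : ℝ → β) : ℝ → β :=
  IccExtend zero_le_one fun s : Icc (0:ℝ) 1 => γ s

theorem iccExtendUnit_of_mem {β : Type*} (γ : ℝ → β) {s : ℝ} (hs : s ∈ Icc (0:ℝ) 1) :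
    iccExtendUnit γ s = γ s :=
  IccExtend_of_mem _ _ hs

section Geodesic

variable {Y : Type*} [MetricSpace Y]

theorem midSet_mono_right {t : ℝ} {A B B' : Set Y} (h : B ⊆ B') :
    MidSet t A B ⊆ MidSet t A B' :=
  fun _ ⟨γ, hγ, h0, h1, ht⟩ => ⟨γ, hγ, h0, h h1, ht⟩

theorem isClosed_setOf_isGeod : IsClosed {γ : ℝ → Y | IsGeod γ} := by
  simp only [IsGeod, ofPred_forall]
  exact isClosed_biInter fun s _ => isClosed_biInter fun u _ =>
    isClosed_eq (by fun_prop) (by fun_prop)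

theorem IsGeod.dist_le {γ : ℝ → Y} (hγ : IsGeod γ) {s : ℝ} (hs : s ∈ Icc (0:ℝ) 1) (y : Y) :
    dist (γ s) y ≤ dist (γ 0) y + 2 * dist (γ 1) y := by
  have hs1 : dist (γ s) (γ 1) ≤ dist (γ 0) (γ 1) := by
    rw [hγ s hs 1 ⟨zero_le_one, le_rfl⟩]
    exact mul_le_of_le_one_left dist_nonneg (by rw [abs_le]; constructor <;> linarith [hs.1, hs.2])
  calc dist (γ s) y ≤ dist (γ s) (γ 1) + dist (γ 1) y := dist_triangle _ _ _
    _ ≤ dist (γ 0) y + dist y (γ 1) + dist (γ 1) y := by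
        linarith [dist_triangle (γ 0) y (γ 1)]
    _ = dist (γ 0) y + 2 * dist (γ 1) y := by rw [dist_comm y]; ring

theorem isGeod_iccExtendUnit {γ : ℝ → Y} (hγ : IsGeod γ) : IsGeod (iccExtendUnit γ) := by
  intro s hs u hu
  simp only [iccExtendUnit_of_mem γ hs, iccExtendUnit_of_mem γ hu,
    iccExtendUnit_of_mem γ (left_mem_Icc.2 zero_le_one),
    iccExtendUnit_of_mem γ (right_mem_Icc.2 zero_le_one)]
  exact hγ s hs u hu

theorem IsGeod.dist_iccExtendUnit_le {γ : ℝ → Y} (hγ : IsGeod γ) (s : ℝ) (y : Y) :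
    dist (iccExtendUnit γ s) y ≤ dist (γ 0) y + 2 * dist (γ 1) y :=
  hγ.dist_le (projIcc 0 1 zero_le_one s).2 y

def boundedGeodThrough (A : Set Y) (x z : Y) (t R r : ℝ) : Set (ℝ → Y) :=
  {γ | IsGeod γ} ∩ (fun γ => γ 0) ⁻¹' A ∩ (fun γ => γ 1) ⁻¹' closedBall x r ∩
    (fun γ => γ t) ⁻¹' {z} ∩ univ.pi fun _ => closedBall x (R + 2 * r)

theorem monotone_boundedGeodThrough (A : Set Y) (x z : Y) (t R : ℝ) :
    Monotone (boundedGeodThrough A x z t R) := by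
  intro r r' h
  unfold boundedGeodThrough
  gcongr

theorem isClosed_boundedGeodThrough {A : Set Y} (hA : IsClosed A) (x z : Y) (t R r : ℝ) :
    IsClosed (boundedGeodThrough A x z t R r) :=
  (((isClosed_setOf_isGeod.inter (hA.preimage (continuous_apply 0))).inter
    (isClosed_closedBall.preimage (continuous_apply 1))).inter
    (isClosed_singleton.preimage (continuous_apply t))).inter
    (isClosed_set_pi fun _ _ => isClosed_closedBall)

theorem isCompact_boundedGeodThrough [ProperSpace Y] {A : Set Y} (hA : IsClosed A)
    (x z : Y) (t R r : ℝ) : IsCompact (boundedGeodThrough A x z t R r) :=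
  (isCompact_univ_pi fun _ => isCompact_closedBall x _).of_isClosed_subset
    (isClosed_boundedGeodThrough hA x z t R r) inter_subset_right

theorem boundedGeodThrough_nonempty {A : Set Y} {x z : Y} {t R r : ℝ}
    (hAR : A ⊆ closedBall x R) (ht : t ∈ Icc (0:ℝ) 1) (hz : z ∈ MidSet t A (closedBall x r)) :
    (boundedGeodThrough A x z t R r).Nonempty := by
  obtain ⟨γ, hγ, h0, h1, hγt⟩ := hz
  refine ⟨iccExtendUnit γ, ⟨⟨⟨isGeod_iccExtendUnit hγ, ?_⟩, ?_⟩, ?_⟩, fun s _ => ?_⟩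
  · simpa [iccExtendUnit_of_mem γ (left_mem_Icc.2 zero_le_one)] using h0
  · simpa [iccExtendUnit_of_mem γ (right_mem_Icc.2 zero_le_one)] using h1
  · simpa [iccExtendUnit_of_mem γ ht] using hγt
  · have := hγ.dist_iccExtendUnit_le s x
    rw [mem_closedBall] at h1 ⊢
    linarith [mem_closedBall.1 (hAR h0)]

theorem iInter_midSet_closedBall_subset [ProperSpace Y] {A : Set Y} (hA : IsCompact A)
    (x : Y) {t : ℝ} (ht : t ∈ Icc (0:ℝ) 1) :
    ⋂ (r : ℝ) (_ : 0 < r), MidSet t A (closedBall x r) ⊆ MidSet t A {x} := by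
  intro z hz
  obtain ⟨R, hAR⟩ := hA.isBounded.subset_closedBall x
  let C : Ioi (0:ℝ) → Set (ℝ → Y) := fun r => boundedGeodThrough A x z t R r
  have hC : (⋂ r, C r).Nonempty := by
    refine IsCompact.nonempty_iInter_of_directed_nonempty_isCompact_isClosed C
      (fun r r' => ⟨⟨min r r', mem_Ioi.2 (lt_min r.2 r'.2)⟩,
        monotone_boundedGeodThrough A x z t R (min_le_left (r : ℝ) r'),
        monotone_boundedGeodThrough A x z t R (min_le_right (r : ℝ) r')⟩)
      (fun r => boundedGeodThrough_nonempty hAR ht (mem_iInter₂.1 hz r r.2))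
      (fun r => isCompact_boundedGeodThrough hA.isClosed x z t R r)
      (fun r => isClosed_boundedGeodThrough hA.isClosed x z t R r)
  obtain ⟨γ, hγ⟩ := hC
  obtain ⟨⟨⟨⟨hgeod, h0⟩, -⟩, hγt⟩, -⟩ := mem_iInter.1 hγ ⟨1, mem_Ioi.2 zero_lt_one⟩
  have h1 : γ 1 = x := eq_of_forall_dist_le fun r hr => (mem_iInter.1 hγ ⟨r, hr⟩).1.1.2
  exact ⟨γ, hgeod, h0, h1, hγt⟩

end Geodesic

/-- in a proper metric space, for `A` compact,
`⋂_{r>0} M_t(A, B_r(x)) = M_t(A, {x})` for every `t ∈ [0,1]`. -/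
theorem stmt9 [ProperSpace X] (A : Set X) (hA : IsCompact A) (x : X) (t : ℝ)
    (ht : t ∈ Set.Icc (0:ℝ) 1) :
    ⋂ (r : ℝ) (_ : 0 < r), MidSet t A (Metric.ball x r) = MidSet t A ({x} : Set X) := by
  refine Subset.antisymm ?_ fun z hz => mem_iInter₂.2 fun r hr =>
    midSet_mono_right (singleton_subset_iff.2 (mem_ball_self hr)) hz
  exact (iInter₂_mono fun r _ => midSet_mono_right ball_subset_closedBall).trans
    (iInter_midSet_closedBall_subset hA x ht)

end
end

section
/- Let (X,d,𝔪) be a metric measure space supporting BM(K,N). Then 𝔪 is qualitatively non-degenerate on spt(𝔪): for every R > 0 and x̄ ∈ spt(𝔪) there is a function f(t) = inf over relevant configurations of τ_{K,N}^{(1−t)}(·)^N with limsup_{t→0} f(t) > 1/2, such that 𝔪̄(M_t(A, x)) ≥ f(t) · 𝔪(A) for every x ∈ B_R(x̄) ∩ spt(𝔪) and every Borel A ⊂ B_R(x̄) ∩ spt(𝔪). -/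
open MeasureTheory Metric Set Filter Bornology
open scoped ENNReal NNReal

noncomputable section

variable {X : Type*} [MetricSpace X] [MeasurableSpace X] [BorelSpace X]

/-!
Applying `BM(K,N)` to `A` and the singleton `{x}` and dropping the second term gives
`𝔪(M_t(A,x)) ≥ τ_{K,N}^{(1-t)}(Θ)^N 𝔪(A)`. As `A ∪ {x}` lies in a ball of radius `R`,
`Θ ≤ 2R`, and the elementary bound `σ_{K,N}^{(s)}(θ) ≥ s e^{-(1-s)θ√(|K|/N)}` (concavity of `sin`
for `K > 0`, convexity of `exp` for `K < 0`) yields `τ_{K,N}^{(s)}(Θ) ≥ s e^{-(1-s)D}` with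
`D = 2R√(|K|/(N-1))`, a bound independent of `x` and `A` that tends to `1` as `s → 1`.
-/

namespace Real

/-- Jensen's inequality for `exp` at the points `a` and `-a`, in disguise. -/
theorem mul_sinh_le_sinh_mul_mul_exp {s : ℝ} (a : ℝ) (hs0 : 0 ≤ s) (hs1 : s ≤ 1) :
    s * sinh a ≤ sinh (s * a) * exp ((1 - s) * a) := by
  have hJensen : exp ((1 - s) * a + s * -a) ≤ (1 - s) * exp a + s * exp (-a) :=
    convexOn_exp.2 (mem_univ a) (mem_univ (-a)) (by linarith) hs0 (by ring)
  have hprod : sinh (s * a) * exp ((1 - s) * a) = (exp a - exp ((1 - s) * a + s * -a)) / 2 := by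
    rw [sinh_eq, div_mul_eq_mul_div, sub_mul, ← exp_add, ← exp_add]
    ring_nf
  rw [hprod, sinh_eq]
  linarith

theorem mul_sin_le_sin_mul_s11 {s a : ℝ} (hs0 : 0 ≤ s) (hs1 : s ≤ 1) (ha0 : 0 ≤ a) (haπ : a ≤ π) :
    s * sin a ≤ sin (s * a) := by
  simpa using strictConcaveOn_sin_Icc.concaveOn.2 (mem_Icc.2 ⟨le_rfl, pi_pos.le⟩)
    (mem_Icc.2 ⟨ha0, haπ⟩) (by linarith : 0 ≤ 1 - s) hs0 (by ring)

end Real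

open Real in
theorem ofReal_mul_exp_le_sigmaC {K N s θ D : ℝ} (hN : 0 < N) (hs0 : 0 ≤ s) (hs1 : s ≤ 1)
    (hθ : 0 ≤ θ) (hD : 0 ≤ D) (hθD : K < 0 → θ * √(-K / N) ≤ D) :
    ENNReal.ofReal (s * exp (-((1 - s) * D))) ≤ sigmaC K N s θ := by
  set E := exp (-((1 - s) * D))
  have hle_s : s * E ≤ s :=
    mul_le_of_le_one_right hs0 (exp_le_one_iff.2 (neg_nonpos.2 (mul_nonneg (by linarith) hD)))
  unfold sigmaC
  split_ifs with h0 hbig hK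
  · exact ENNReal.ofReal_le_ofReal hle_s
  · exact le_top
  · obtain ⟨-, hθ0⟩ := not_or.1 h0
    set a := θ * √(K / N)
    have ha0 : 0 < a := mul_pos (hθ.lt_of_ne (Ne.symm hθ0)) (sqrt_pos.2 (div_pos hK hN))
    have haπ : a < π := by
      have ha2 : a ^ 2 * N = K * θ ^ 2 := by
        rw [mul_pow, sq_sqrt (div_pos hK hN).le]
        field_simp
      have : a ^ 2 < π ^ 2 := by nlinarith
      nlinarith [pi_pos]
    refine ENNReal.ofReal_le_ofReal (hle_s.trans ?_)
    rw [le_div_iff₀ (sin_pos_of_pos_of_lt_pi ha0 haπ), mul_assoc]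
    exact mul_sin_le_sin_mul_s11 hs0 hs1 ha0.le haπ.le
  · obtain ⟨hK0, hθ0⟩ := not_or.1 h0
    have hKneg : K < 0 := lt_of_le_of_ne (not_lt.1 hK) hK0
    set a := θ * √(-K / N)
    have ha0 : 0 < a :=
      mul_pos (hθ.lt_of_ne (Ne.symm hθ0)) (sqrt_pos.2 (div_pos (neg_pos.2 hKneg) hN))
    have hEa : E * exp ((1 - s) * a) ≤ 1 := by
      rw [← exp_add, exp_le_one_iff]
      nlinarith [hθD hKneg]
    refine ENNReal.ofReal_le_ofReal ?_
    rw [mul_assoc s θ, le_div_iff₀ (sinh_pos_iff.2 ha0)]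
    calc s * E * sinh a = E * (s * sinh a) := by ring
      _ ≤ E * (sinh (s * a) * exp ((1 - s) * a)) :=
        mul_le_mul_of_nonneg_left (mul_sinh_le_sinh_mul_mul_exp a hs0 hs1) (exp_pos _).le
      _ = sinh (s * a) * (E * exp ((1 - s) * a)) := by ring
      _ ≤ sinh (s * a) :=
        mul_le_of_le_one_right (sinh_nonneg_iff.2 (mul_nonneg hs0 ha0.le)) hEa

theorem ofReal_le_tauC {K N s θ m : ℝ} (hN : 1 ≤ N) (hms : m ≤ s)
    (hσ : ENNReal.ofReal m ≤ sigmaC K (N - 1) s θ) : ENNReal.ofReal m ≤ tauC K N s θ := by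
  have hN0 : 0 ≤ 1 / N := by positivity
  have hN1 : 0 ≤ 1 - 1 / N := sub_nonneg.2 ((div_le_one (by linarith)).2 hN)
  calc ENNReal.ofReal m = ENNReal.ofReal m ^ (1 / N + (1 - 1 / N)) := by
        rw [add_sub_cancel, ENNReal.rpow_one]
    _ = ENNReal.ofReal m ^ (1 / N) * ENNReal.ofReal m ^ (1 - 1 / N) :=
        ENNReal.rpow_add_of_nonneg _ _ hN0 hN1
    _ ≤ tauC K N s θ :=
        mul_le_mul' (ENNReal.rpow_le_rpow (ENNReal.ofReal_le_ofReal hms) hN0)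
          (ENNReal.rpow_le_rpow hσ hN1)

open Real in
theorem ofReal_mul_exp_le_tauE {K N s L : ℝ} {θ : ℝ≥0∞} (hN : 1 < N) (hs0 : 0 ≤ s)
    (hs1 : s ≤ 1) (hL : 0 ≤ L) (hθL : θ ≤ ENNReal.ofReal L) :
    ENNReal.ofReal (s * exp (-((1 - s) * (L * √(|K| / (N - 1)))))) ≤ tauE K N s θ := by
  have hD : 0 ≤ L * √(|K| / (N - 1)) := by positivity
  rw [tauE, if_neg (ne_top_of_le_ne_top ENNReal.ofReal_ne_top hθL)]
  refine ofReal_le_tauC hN.le ?_ (ofReal_mul_exp_le_sigmaC (by linarith) hs0 hs1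
    ENNReal.toReal_nonneg hD fun hK => ?_)
  · exact mul_le_of_le_one_right hs0 (exp_le_one_iff.2 (neg_nonpos.2 (mul_nonneg (by linarith) hD)))
  · rw [← abs_of_neg hK]
    exact mul_le_mul_of_nonneg_right (ENNReal.toReal_le_of_le_ofReal hL hθL) (sqrt_nonneg _)

theorem Theta_le_ediam_union {Y : Type*} [MetricSpace Y] (K : ℝ) {A B : Set Y}
    (hA : A.Nonempty) (hB : B.Nonempty) : Theta K A B ≤ ediam (A ∪ B) := by
  unfold Theta
  split_ifs
  · obtain ⟨x, hx⟩ := hA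
    obtain ⟨y, hy⟩ := hB
    exact (iInf₂_le x hx).trans <| (iInf₂_le y hy).trans <|
      edist_le_ediam_of_mem (Or.inl hx) (Or.inr hy)
  · exact iSup₂_le fun x hx => iSup₂_le fun y hy => edist_le_ediam_of_mem (Or.inl hx) (Or.inr hy)

theorem Theta_le_of_subset_ball {Y : Type*} [MetricSpace Y] (K : ℝ) {A B : Set Y} {c : Y}
    {r : ℝ} (hA : A.Nonempty) (hB : B.Nonempty) (hAr : A ⊆ ball c r) (hBr : B ⊆ ball c r) :
    Theta K A B ≤ ENNReal.ofReal (2 * r) := calc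
  Theta K A B ≤ ediam (A ∪ B) := Theta_le_ediam_union K hA hB
  _ ≤ ediam (ball c r) := ediam_mono (union_subset hAr hBr)
  _ ≤ ENNReal.ofReal (2 * r) := by
    rw [← eball_ofReal, ENNReal.ofReal_mul zero_le_two, ENNReal.ofReal_ofNat]
    exact ediam_eball_le

theorem ENNReal.rpow_mul_le_of_mul_rpow_one_div_le {a b c : ℝ≥0∞} {p : ℝ} (hp : 0 < p)
    (h : c * a ^ (1 / p) ≤ b ^ (1 / p)) : c ^ p * a ≤ b := by
  have := ENNReal.rpow_le_rpow h hp.le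
  rwa [ENNReal.mul_rpow_of_nonneg _ _ hp.le, ← ENNReal.rpow_mul, ← ENNReal.rpow_mul,
    one_div_mul_cancel hp.ne', ENNReal.rpow_one, ENNReal.rpow_one] at this

theorem stmt11_general (𝔪 : Measure X)
    (K N : ℝ) (hN : 1 < N) (h : BM K N 𝔪) :
    ∀ R > (0:ℝ), ∀ xb ∈ mspt 𝔪, ∃ f : ℝ → ℝ,
      (∀ t ∈ Set.Ioo (0:ℝ) 1, 0 < f t) ∧
      (1/2 : ℝ) < Filter.limsup f (nhdsWithin 0 (Set.Ioi 0)) ∧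
      ∀ t ∈ Set.Ioo (0:ℝ) 1, ∀ x ∈ Metric.ball xb R ∩ mspt 𝔪, ∀ A : Set X,
        MeasurableSet A → A ⊆ Metric.ball xb R ∩ mspt 𝔪 →
        ENNReal.ofReal (f t) * 𝔪 A ≤ 𝔪 (MidSet t A ({x} : Set X)) := by
  intro R hR xb _
  set g : ℝ → ℝ := fun t => (1 - t) * Real.exp (-(t * (2 * R * √(|K| / (N - 1)))))
  have hg : ∀ t ∈ Ioo (0:ℝ) 1, 0 < g t :=
    fun t ht => mul_pos (by linarith [ht.2]) (Real.exp_pos _)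
  refine ⟨fun t => g t ^ N, fun t ht => Real.rpow_pos_of_pos (hg t ht) N, ?_, ?_⟩
  · have hcont : Continuous fun t => g t ^ N :=
      (by fun_prop : Continuous g).rpow_const fun _ => Or.inr (by linarith)
    have hlim : Tendsto (fun t => g t ^ N) (nhdsWithin 0 (Ioi 0)) (nhds 1) := by
      simpa [g] using hcont.continuousAt.tendsto.mono_left (nhdsWithin_le_nhds (a := (0:ℝ)))
    rw [hlim.limsup_eq]
    norm_num
  · intro t ht x hx A hA hAsub
    rcases A.eq_empty_or_nonempty with rfl | hAne
    · simp
    have hΘ : Theta K A {x} ≤ ENNReal.ofReal (2 * R) := Theta_le_of_subset_ball K hAne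
      (singleton_nonempty x) (hAsub.trans inter_subset_left) (singleton_subset_iff.2 hx.1)
    have hτ : ENNReal.ofReal (g t) ≤ tauE K N (1 - t) (Theta K A {x}) := by
      simpa only [sub_sub_cancel] using ofReal_mul_exp_le_tauE hN (s := 1 - t)
        (by linarith [ht.2]) (by linarith [ht.1]) (by positivity) hΘ
    have hbm := h A {x} hA (measurableSet_singleton x) hAne (singleton_nonempty x)
      (hAsub.trans inter_subset_right) (singleton_subset_iff.2 hx.2) N le_rfl t
      ⟨ht.1.le, ht.2.le⟩
    rw [← ENNReal.ofReal_rpow_of_nonneg (hg t ht).le (by linarith)]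
    exact ENNReal.rpow_mul_le_of_mul_rpow_one_div_le (by linarith)
      ((mul_le_mul_left hτ _).trans (le_self_add.trans hbm))

/-- `BM(K,N)` implies that `𝔪` is qualitatively non-degenerate on its
support. -/
theorem stmt11 (𝔪 : Measure X) (hfin : ∀ s : Set X, IsBounded s → 𝔪 s < ⊤)
    (K N : ℝ) (hN : 1 < N) (h : BM K N 𝔪) :
    ∀ R > (0:ℝ), ∀ xb ∈ mspt 𝔪, ∃ f : ℝ → ℝ,
      (∀ t ∈ Set.Ioo (0:ℝ) 1, 0 < f t) ∧
      (1/2 : ℝ) < Filter.limsup f (nhdsWithin 0 (Set.Ioi 0)) ∧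
      ∀ t ∈ Set.Ioo (0:ℝ) 1, ∀ x ∈ Metric.ball xb R ∩ mspt 𝔪, ∀ A : Set X,
        MeasurableSet A → A ⊆ Metric.ball xb R ∩ mspt 𝔪 →
        ENNReal.ofReal (f t) * 𝔪 A ≤ 𝔪 (MidSet t A ({x} : Set X)) :=
  stmt11_general 𝔪 K N hN h

end
end

section
/- Let μ = ρ𝔪 be a bounded probability measure (bounded support, density bounded above and below away from zero on its support). Then there exists a sequence of step measures μ_n = ρ_n𝔪 converging to μ in W₂, such that {μ_n} ∪ {μ} is uniformly bounded and ρ_n^{−1/N'} → ρ^{−1/N'} in L¹(𝔪) for every N' > 1. -/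
open MeasureTheory Metric Set Filter Bornology
open scoped ENNReal NNReal

noncomputable section

variable {X : Type*} [MetricSpace X] [MeasurableSpace X] [BorelSpace X]

/-! Average `ρ` over the cells of a grid of mesh `δ = 1 / (n + 1)` in the values of `ρ`. The
resulting step densities keep the mass, stay in `[c, C]` and are `δ`-close to `ρ` on `S`, so they
converge to `ρ` almost everywhere. Since they are bounded below by `c > 0`, dominated convergence
gives the `L¹` convergence of every power of them. For `W₂`, only the excess mass `∫ (ρ - ρₙ)₊`
has to move, over a distance at most `diam S`, and it tends to zero by dominated convergence. -/

open scoped Topology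

section WithDensity

variable {α : Type*} [MeasurableSpace α] {𝔪 : Measure α}

lemma lintegral_eq_one_of_isProbabilityMeasure_withDensity {f : α → ℝ≥0∞}
    [IsProbabilityMeasure (𝔪.withDensity f)] : ∫⁻ x, f x ∂𝔪 = 1 := by
  rw [← setLIntegral_univ, ← withDensity_apply _ .univ, measure_univ]

lemma withDensity_finset_sum {ι : Type*} (s : Finset ι) {f : ι → α → ℝ≥0∞}
    (hf : ∀ i, Measurable (f i)) :
    𝔪.withDensity (fun x => ∑ i ∈ s, f i x) = ∑ i ∈ s, 𝔪.withDensity (f i) := by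
  classical
  induction s using Finset.induction_on with
  | empty => simp
  | insert i s hi ih =>
    simp_rw [Finset.sum_insert hi]
    rw [← ih, ← withDensity_add_left (hf i)]
    rfl

lemma toReal_withDensity_div_mem_Icc {ρ : α → ℝ} {A : Set α} (hA : MeasurableSet A)
    (h0 : 𝔪 A ≠ 0) (htop : 𝔪 A ≠ ⊤) {a b : ℝ} (ha : 0 ≤ a)
    (h : ∀ᵐ x ∂𝔪.restrict A, ρ x ∈ Icc a b) :
    ((𝔪.withDensity fun x => ENNReal.ofReal (ρ x)) A / 𝔪 A).toReal ∈ Icc a b := by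
  have : (ae (𝔪.restrict A)).NeBot := ae_restrict_neBot.2 h0
  obtain ⟨x, hx⟩ := h.exists
  rw [withDensity_apply _ hA]
  have hlow : ENNReal.ofReal a * 𝔪 A ≤ ∫⁻ x in A, ENNReal.ofReal (ρ x) ∂𝔪 := by
    rw [← setLIntegral_const]
    exact lintegral_mono_ae (h.mono fun x hx => ENNReal.ofReal_le_ofReal hx.1)
  have hup : ∫⁻ x in A, ENNReal.ofReal (ρ x) ∂𝔪 ≤ ENNReal.ofReal b * 𝔪 A := by
    rw [← setLIntegral_const]
    exact lintegral_mono_ae (h.mono fun x hx => ENNReal.ofReal_le_ofReal hx.2)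
  have hup' := ENNReal.div_le_of_le_mul hup
  refine ⟨(ENNReal.ofReal_le_iff_le_toReal (ne_top_of_le_ne_top ENNReal.ofReal_ne_top hup')).1
    ((ENNReal.le_div_iff_mul_le (Or.inl h0) (Or.inl htop)).2 hlow), ?_⟩
  exact ENNReal.toReal_le_of_le_ofReal (ha.trans (hx.1.trans hx.2)) hup'

lemma mul_normRestrict_univ {μ : Measure α} (hμ : μ ≪ 𝔪) {A : Set α} (hA : 𝔪 A ≠ ⊤) :
    μ A * normRestrict 𝔪 A univ = μ A := by
  rw [normRestrict, Measure.smul_apply, Measure.restrict_apply_univ, smul_eq_mul]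
  rcases eq_or_ne (𝔪 A) 0 with h0 | h0
  · simp [hμ h0]
  · rw [ENNReal.inv_mul_cancel h0 hA, mul_one]

lemma withDensity_apply_eq_one {f : α → ℝ≥0∞} [IsProbabilityMeasure (𝔪.withDensity f)]
    {S : Set α} (hS : MeasurableSet S) (hf : ∀ x ∉ S, f x = 0) : 𝔪.withDensity f S = 1 := by
  rw [withDensity_apply _ hS, setLIntegral_eq_of_support_subset fun x hx => by_contra fun hxS =>
    hx (hf x hxS), lintegral_eq_one_of_isProbabilityMeasure_withDensity]

-- Cells of measure zero contribute nothing and are dropped; the others are enumerated by `Fin`.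
lemma isStepMeasure_finset_sum {ι : Type*} (s : Finset ι) {A : ι → Set α} (lam : ι → ℝ≥0∞)
    (hA : ∀ i, MeasurableSet (A i)) (hdisj : Pairwise (Function.onFun Disjoint A))
    (hfin : ∀ i, 𝔪 (A i) < ⊤) :
    IsStepMeasure 𝔪 (∑ i ∈ s, lam i • normRestrict 𝔪 (A i)) := by
  classical
  set t := s.filter fun i => 𝔪 (A i) ≠ 0
  have hsum : ∑ i ∈ s, lam i • normRestrict 𝔪 (A i) = ∑ i ∈ t, lam i • normRestrict 𝔪 (A i) := by
    refine (Finset.sum_filter_of_ne (p := fun i => 𝔪 (A i) ≠ 0) fun i _ hi h0 => hi ?_).symm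
    simp [normRestrict, Measure.restrict_eq_zero.2 h0]
  let e := t.equivFin
  refine ⟨t.card, fun j => A (e.symm j), fun j => lam (e.symm j), fun j => hA _,
    fun i j hij => hdisj fun h => hij (e.symm.injective (Subtype.ext h)),
    fun j => ⟨pos_iff_ne_zero.2 (Finset.mem_filter.1 (e.symm j).2).2, hfin _⟩, ?_⟩
  rw [hsum, ← Finset.sum_coe_sort t]
  exact (e.symm.sum_comp fun i : t => lam i • normRestrict 𝔪 (A i)).symm

end WithDensity

section Cells

variable {α : Type*} (S : Set α) (σ : α → ℕ)

def cell (k : ℕ) : Set α := S ∩ σ ⁻¹' {k}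

variable {S σ} in
lemma pairwise_disjoint_cell : Pairwise (Function.onFun Disjoint (cell S σ)) := fun _ _ hkl =>
  disjoint_left.2 fun _ hk hl => hkl (hk.2.symm.trans hl.2)

variable [MeasurableSpace α]

-- The density of the conditional expectation of `μ` w.r.t. `𝔪` given the cells; on a cell `A` of
-- `𝔪`-measure zero it takes the junk value `(μ A / 0).toReal`.
def cellDensity (μ 𝔪 : Measure α) : α → ℝ :=
  S.indicator fun x => (μ (cell S σ (σ x)) / 𝔪 (cell S σ (σ x))).toReal

variable {S σ} {𝔪 : Measure α}

lemma measurableSet_cell (hS : MeasurableSet S) (hσ : Measurable σ) (k : ℕ) :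
    MeasurableSet (cell S σ k) :=
  hS.inter (hσ (measurableSet_singleton k))

lemma measurable_cellDensity (hS : MeasurableSet S) (hσ : Measurable σ) (μ : Measure α) :
    Measurable (cellDensity S σ μ 𝔪) :=
  ((measurable_from_nat (f := fun k => (μ (cell S σ k) / 𝔪 (cell S σ k)).toReal)).comp
    hσ).indicator hS

lemma sum_measure_cell (hS : MeasurableSet S) (hσ : Measurable σ) {K : ℕ}
    (hK : ∀ x ∈ S, σ x ≤ K) (ν : Measure α) :
    ∑ k ∈ Finset.range (K + 1), ν (cell S σ k) = ν S := by
  rw [← measure_biUnion_finset ((pairwise_disjoint_cell (S := S) (σ := σ)).set_pairwise _)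
    (fun k _ => measurableSet_cell hS hσ k)]
  congr 1
  ext x
  simp only [cell, mem_iUnion, mem_inter_iff, mem_preimage, mem_singleton_iff, Finset.mem_range,
    exists_prop]
  exact ⟨fun ⟨_, _, hx, _⟩ => hx, fun hx => ⟨σ x, Nat.lt_succ_of_le (hK x hx), hx, rfl⟩⟩

lemma withDensity_cellDensity (hS : MeasurableSet S) (hσ : Measurable σ) {K : ℕ}
    (hK : ∀ x ∈ S, σ x ≤ K) (μ : Measure α) [IsFiniteMeasure μ] :
    𝔪.withDensity (fun x => ENNReal.ofReal (cellDensity S σ μ 𝔪 x)) =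
      ∑ k ∈ Finset.range (K + 1), μ (cell S σ k) • normRestrict 𝔪 (cell S σ k) := by
  have hpt : (fun x => ENNReal.ofReal (cellDensity S σ μ 𝔪 x)) =
      fun x => ∑ k ∈ Finset.range (K + 1), (cell S σ k).indicator
        (fun _ => ENNReal.ofReal (μ (cell S σ k) / 𝔪 (cell S σ k)).toReal) x := by
    ext x
    by_cases hx : x ∈ S
    · rw [Finset.sum_eq_single_of_mem (σ x) (Finset.mem_range.2 (Nat.lt_succ_of_le (hK x hx)))
        fun k _ hk => indicator_of_notMem (fun hxk => hk hxk.2.symm) _,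
        indicator_of_mem (show x ∈ cell S σ (σ x) from ⟨hx, rfl⟩), cellDensity, indicator_of_mem hx]
    · simp [cellDensity, hx, cell]
  rw [hpt, withDensity_finset_sum _ fun k => measurable_const.indicator (measurableSet_cell hS hσ k)]
  refine Finset.sum_congr rfl fun k _ => ?_
  rw [withDensity_indicator (measurableSet_cell hS hσ k), withDensity_const, normRestrict, smul_smul]
  rcases eq_or_ne (𝔪 (cell S σ k)) 0 with h0 | h0
  · simp [Measure.restrict_eq_zero.2 h0]
  · rw [ENNReal.ofReal_toReal (ENNReal.div_ne_top (measure_ne_top μ _) h0), div_eq_mul_inv]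

lemma withDensity_cellDensity_univ (hS : MeasurableSet S) (hσ : Measurable σ) {K : ℕ}
    (hK : ∀ x ∈ S, σ x ≤ K) {μ : Measure α} [IsFiniteMeasure μ] (hμ : μ ≪ 𝔪)
    (hfin : ∀ k, 𝔪 (cell S σ k) ≠ ⊤) :
    𝔪.withDensity (fun x => ENNReal.ofReal (cellDensity S σ μ 𝔪 x)) univ = μ S := by
  simp_rw [withDensity_cellDensity hS hσ hK, Measure.coe_finsetSum, Finset.sum_apply,
    Measure.smul_apply, smul_eq_mul, mul_normRestrict_univ hμ (hfin _)]
  exact sum_measure_cell hS hσ hK μ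

lemma ae_measure_cell_ne_zero (hS : MeasurableSet S) :
    ∀ᵐ x ∂𝔪.restrict S, 𝔪 (cell S σ (σ x)) ≠ 0 := by
  rw [ae_restrict_iff' hS, ae_iff]
  refine measure_mono_null (t := ⋃ k, {x | x ∈ cell S σ k ∧ 𝔪 (cell S σ k) = 0})
    (fun x hx => ?_) (measure_iUnion_null fun k => ?_)
  · obtain ⟨hxS, hx0⟩ : x ∈ S ∧ 𝔪 (cell S σ (σ x)) = 0 := by simpa using hx
    exact mem_iUnion.2 ⟨σ x, ⟨hxS, rfl⟩, hx0⟩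
  · by_cases hk : 𝔪 (cell S σ k) = 0
    · exact measure_mono_null (fun x hx => hx.1) hk
    · simp [hk]

lemma ae_cellDensity_mem_Icc (hS : MeasurableSet S) (hσ : Measurable σ)
    (hfin : ∀ k, 𝔪 (cell S σ k) ≠ ⊤) {ρ : α → ℝ} {a b : ℕ → ℝ} (ha : ∀ k, 0 ≤ a k)
    (h : ∀ᵐ x ∂𝔪.restrict S, ρ x ∈ Icc (a (σ x)) (b (σ x))) :
    ∀ᵐ x ∂𝔪.restrict S, cellDensity S σ (𝔪.withDensity fun x => ENNReal.ofReal (ρ x)) 𝔪 x ∈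
      Icc (a (σ x)) (b (σ x)) := by
  filter_upwards [ae_measure_cell_ne_zero hS, ae_restrict_mem hS] with x hx0 hxS
  rw [cellDensity, indicator_of_mem hxS]
  have hcell := measurableSet_cell hS hσ (σ x)
  refine toReal_withDensity_div_mem_Icc hcell hx0 (hfin _) (ha _) ?_
  filter_upwards [ae_restrict_of_ae_restrict_of_subset inter_subset_left h,
    ae_restrict_mem hcell] with y hy hyx
  rwa [hyx.2] at hy

end Cells

section Approximation

variable {α : Type*} [MeasurableSpace α] {𝔪 : Measure α} {S : Set α} {ρ : α → ℝ}

-- Average `ρ` over the cells where `⌊(ρ - c) / δ⌋₊` is constant; capping this index at its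
-- a.e. bound `K` on `S` leaves finitely many cells.
lemma exists_step_approx (hS : MeasurableSet S) (hSfin : 𝔪 S ≠ ⊤) (hρ : Measurable ρ)
    [IsProbabilityMeasure (𝔪.withDensity fun x => ENNReal.ofReal (ρ x))]
    (hsupp : ∀ x ∉ S, ρ x = 0) {c C : ℝ} (hc : 0 ≤ c)
    (hbd : ∀ᵐ x ∂𝔪.restrict S, ρ x ∈ Icc c C) {δ : ℝ} (hδ : 0 < δ) :
    ∃ ρ' : α → ℝ, Measurable ρ' ∧ (∀ x ∉ S, ρ' x = 0) ∧
      IsProbabilityMeasure (𝔪.withDensity fun x => ENNReal.ofReal (ρ' x)) ∧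
      IsStepMeasure 𝔪 (𝔪.withDensity fun x => ENNReal.ofReal (ρ' x)) ∧
      ∀ᵐ x ∂𝔪.restrict S, ρ' x ∈ Icc c C ∧ |ρ' x - ρ x| ≤ δ := by
  set μ := 𝔪.withDensity fun x => ENNReal.ofReal (ρ x)
  set K := ⌊(C - c) / δ⌋₊
  set σ : α → ℕ := fun x => min ⌊(ρ x - c) / δ⌋₊ K
  have hσ : Measurable σ := ((hρ.sub_const c).div_const δ).nat_floor.min measurable_const
  have hK : ∀ x ∈ S, σ x ≤ K := fun x _ => min_le_right _ _
  have hfin : ∀ k, 𝔪 (cell S σ k) ≠ ⊤ := fun k =>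
    ne_top_of_le_ne_top hSfin (measure_mono inter_subset_left)
  have hgrid : ∀ᵐ x ∂𝔪.restrict S, ρ x ∈ Icc (c + σ x * δ) (c + (σ x + 1) * δ) := by
    filter_upwards [hbd] with x hx
    have ht : 0 ≤ (ρ x - c) / δ := div_nonneg (by linarith [hx.1]) hδ.le
    have hσx : σ x = ⌊(ρ x - c) / δ⌋₊ :=
      min_eq_left (Nat.floor_le_floor (div_le_div_of_nonneg_right (by linarith [hx.2]) hδ.le))
    have hlow := (le_div_iff₀ hδ).1 (hσx ▸ Nat.floor_le ht)
    have hup := (div_lt_iff₀ hδ).1 (hσx ▸ Nat.lt_floor_add_one ((ρ x - c) / δ))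
    constructor <;> linarith
  have hcC := ae_cellDensity_mem_Icc (a := fun _ => c) (b := fun _ => C) hS hσ hfin
    (fun _ => hc) hbd
  have hcell := ae_cellDensity_mem_Icc (a := fun k => c + k * δ) (b := fun k => c + (k + 1) * δ)
    hS hσ hfin (fun k => by positivity) hgrid
  refine ⟨cellDensity S σ μ 𝔪, measurable_cellDensity hS hσ μ,
    fun x hx => indicator_of_notMem hx _, ⟨?_⟩, ?_, ?_⟩
  · rw [withDensity_cellDensity_univ hS hσ hK (withDensity_absolutelyContinuous _ _) hfin,
      withDensity_apply_eq_one hS fun x hx => by simp [hsupp x hx]]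
  · rw [withDensity_cellDensity hS hσ hK]
    exact isStepMeasure_finset_sum _ _ (measurableSet_cell hS hσ) pairwise_disjoint_cell
      fun k => (hfin k).lt_top
  · filter_upwards [hcC, hcell, hgrid] with x hxcC hxcell hxgrid
    refine ⟨hxcC, abs_sub_le_iff.2 ⟨?_, ?_⟩⟩ <;> linarith [hxcell.1, hxcell.2, hxgrid.1, hxgrid.2]

end Approximation

section Transport

variable {α : Type*} [MetricSpace α] [MeasurableSpace α] (S : Set α)

-- Transport the common part `μ₀` along the diagonal for free and couple the excesses `μ₁`, `ν₁`
-- independently; each unit of excess mass then travels at most `ediam S`.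
lemma W2sq_add_le (μ₀ μ₁ ν₁ : Measure α) [IsFiniteMeasure μ₁] [IsFiniteMeasure ν₁]
    (hmass : μ₁ univ = ν₁ univ) (hμ₁ : ∀ᵐ x ∂μ₁, x ∈ S) (hν₁ : ∀ᵐ x ∂ν₁, x ∈ S) :
    W2sq (μ₀ + μ₁) (μ₀ + ν₁) ≤ ediam S ^ 2 * ν₁ univ := by
  set ε := ν₁ univ
  have hdiag : Measurable (fun x : α => (x, x)) := measurable_id.prodMk measurable_id
  have hdiag_cost : ∫⁻ p, edist p.1 p.2 ^ 2 ∂(μ₀.map fun x => (x, x)) = 0 :=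
    le_antisymm ((lintegral_map_le _ _).trans (by simp)) zero_le
  rcases eq_or_ne ε 0 with hε | hε
  · have hμ₁0 : μ₁ = 0 := Measure.measure_univ_eq_zero.1 (hmass.trans hε)
    have hν₁0 : ν₁ = 0 := Measure.measure_univ_eq_zero.1 hε
    have hcoup : IsCoupling (μ₀ + μ₁) (μ₀ + ν₁) (μ₀.map fun x => (x, x)) := by
      constructor <;>
      · rw [Measure.map_map (by fun_prop) hdiag]
        simp [hμ₁0, hν₁0, Function.comp_def]
    calc W2sq (μ₀ + μ₁) (μ₀ + ν₁) ≤ ∫⁻ p, edist p.1 p.2 ^ 2 ∂(μ₀.map fun x => (x, x)) :=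
          iInf₂_le _ hcoup
      _ ≤ _ := hdiag_cost.trans_le zero_le
  have hεtop : ε ≠ ⊤ := measure_ne_top ν₁ univ
  set π := μ₀.map (fun x => (x, x)) + ε⁻¹ • μ₁.prod ν₁
  have hcoup : IsCoupling (μ₀ + μ₁) (μ₀ + ν₁) π := by
    constructor
    · rw [Measure.map_add _ _ measurable_fst, Measure.map_smul,
        Measure.map_map measurable_fst hdiag, Measure.map_fst_prod, smul_smul,
        ENNReal.inv_mul_cancel hε hεtop, one_smul]
      simp [Function.comp_def]
    · rw [Measure.map_add _ _ measurable_snd, Measure.map_smul,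
        Measure.map_map measurable_snd hdiag, Measure.map_snd_prod, smul_smul, hmass,
        ENNReal.inv_mul_cancel hε hεtop, one_smul]
      simp [Function.comp_def]
  have hcost : ∫⁻ p, edist p.1 p.2 ^ 2 ∂(μ₁.prod ν₁) ≤ ediam S ^ 2 * (ε * ε) := by
    have hS2 : ∀ᵐ p ∂(μ₁.prod ν₁), p.1 ∈ S ∧ p.2 ∈ S :=
      (Measure.quasiMeasurePreserving_fst.ae hμ₁).and (Measure.quasiMeasurePreserving_snd.ae hν₁)
    calc ∫⁻ p, edist p.1 p.2 ^ 2 ∂(μ₁.prod ν₁) ≤ ∫⁻ _, ediam S ^ 2 ∂(μ₁.prod ν₁) :=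
          lintegral_mono_ae <| hS2.mono fun p hp =>
            pow_le_pow_left' (Metric.edist_le_ediam_of_mem hp.1 hp.2) 2
      _ = ediam S ^ 2 * (ε * ε) := by
          rw [lintegral_const, ← univ_prod_univ, Measure.prod_prod, hmass]
  calc W2sq (μ₀ + μ₁) (μ₀ + ν₁) ≤ ∫⁻ p, edist p.1 p.2 ^ 2 ∂π := iInf₂_le π hcoup
    _ = ε⁻¹ * ∫⁻ p, edist p.1 p.2 ^ 2 ∂(μ₁.prod ν₁) := by
        rw [lintegral_add_measure, lintegral_smul_measure, hdiag_cost, zero_add, smul_eq_mul]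
    _ ≤ ε⁻¹ * (ediam S ^ 2 * (ε * ε)) := by gcongr
    _ = ediam S ^ 2 * ε := by
        rw [mul_left_comm, ← mul_assoc ε⁻¹, ENNReal.inv_mul_cancel hε hεtop, one_mul]

variable {S} {𝔪 : Measure α}

lemma W2sq_withDensity_le {f g : α → ℝ≥0∞} (hf : Measurable f) (hg : Measurable g)
    (hmass : ∫⁻ x, f x ∂𝔪 = ∫⁻ x, g x ∂𝔪) (hfin : ∫⁻ x, g x ∂𝔪 ≠ ⊤)
    (hfS : ∀ x ∉ S, f x = 0) (hgS : ∀ x ∉ S, g x = 0) :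
    W2sq (𝔪.withDensity f) (𝔪.withDensity g) ≤ ediam S ^ 2 * ∫⁻ x, (g x - f x) ∂𝔪 := by
  set r := fun x => min (f x) (g x)
  have hr : Measurable r := hf.min hg
  have hsplit : ∀ h : α → ℝ≥0∞, r ≤ h →
      𝔪.withDensity h = 𝔪.withDensity r + 𝔪.withDensity (fun x => h x - r x) := fun h hrh => by
    rw [← withDensity_add_left hr]
    congr 1 with x
    exact (add_tsub_cancel_of_le (hrh x)).symm
  have hexcess_mass : ∀ h : α → ℝ≥0∞,
      (𝔪.withDensity fun x => h x - r x) univ = ∫⁻ x, (h x - r x) ∂𝔪 := fun h => by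
    rw [withDensity_apply _ MeasurableSet.univ, Measure.restrict_univ]
  have hexcess_mem : ∀ h : α → ℝ≥0∞, Measurable h → (∀ x ∉ S, h x = 0) →
      ∀ᵐ x ∂𝔪.withDensity (fun x => h x - r x), x ∈ S := fun h hh hhS => by
    refine (ae_withDensity_iff (hh.sub hr)).2 (ae_of_all _ fun x hx => ?_)
    by_contra hxS
    simp [hhS x hxS] at hx
  have hgr : ∫⁻ x, (g x - r x) ∂𝔪 = ∫⁻ x, (g x - f x) ∂𝔪 := by
    simp_rw [r, min_comm (f _), tsub_min]
  have hgr_fin : ∫⁻ x, (g x - r x) ∂𝔪 ≠ ⊤ :=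
    ne_top_of_le_ne_top hfin (lintegral_mono fun x => tsub_le_self)
  have hr_fin : ∫⁻ x, r x ∂𝔪 ≠ ⊤ :=
    ne_top_of_le_ne_top hfin (lintegral_mono fun x => min_le_right _ _)
  have hexcess_eq : ∫⁻ x, (f x - r x) ∂𝔪 = ∫⁻ x, (g x - r x) ∂𝔪 := by
    rw [lintegral_sub hr hr_fin (ae_of_all _ fun x => min_le_left _ _),
      lintegral_sub hr hr_fin (ae_of_all _ fun x => min_le_right _ _), hmass]
  have : IsFiniteMeasure (𝔪.withDensity fun x => g x - r x) :=
    ⟨by rw [hexcess_mass g]; exact hgr_fin.lt_top⟩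
  have : IsFiniteMeasure (𝔪.withDensity fun x => f x - r x) :=
    ⟨by rw [hexcess_mass f, hexcess_eq]; exact hgr_fin.lt_top⟩
  rw [hsplit f (fun x => min_le_left _ _), hsplit g (fun x => min_le_right _ _), ← hgr,
    ← hexcess_mass g]
  exact W2sq_add_le S _ _ _ (by rw [hexcess_mass f, hexcess_mass g, hexcess_eq])
    (hexcess_mem f hf hfS) (hexcess_mem g hg hgS)

lemma tendsto_W2_withDensity (hS : IsBounded S) {g : ℕ → α → ℝ≥0∞} {g₀ : α → ℝ≥0∞}
    (hg : ∀ n, Measurable (g n)) (hg₀ : Measurable g₀)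
    (hprob : ∀ n, IsProbabilityMeasure (𝔪.withDensity (g n)))
    (hprob₀ : IsProbabilityMeasure (𝔪.withDensity g₀))
    (hgS : ∀ n, ∀ x ∉ S, g n x = 0) (hg₀S : ∀ x ∉ S, g₀ x = 0)
    (hlim : ∀ᵐ x ∂𝔪, Tendsto (fun n => g n x) atTop (𝓝 (g₀ x))) :
    Tendsto (fun n => W2 (𝔪.withDensity (g n)) (𝔪.withDensity g₀)) atTop (𝓝 0) := by
  have hmass n : ∫⁻ x, g n x ∂𝔪 = ∫⁻ x, g₀ x ∂𝔪 := by
    rw [lintegral_eq_one_of_isProbabilityMeasure_withDensity,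
      lintegral_eq_one_of_isProbabilityMeasure_withDensity]
  have hfin : ∫⁻ x, g₀ x ∂𝔪 ≠ ⊤ := by
    rw [lintegral_eq_one_of_isProbabilityMeasure_withDensity]
    exact ENNReal.one_ne_top
  have hdefect : Tendsto (fun n => ∫⁻ x, (g₀ x - g n x) ∂𝔪) atTop (𝓝 0) := by
    have := tendsto_lintegral_of_dominated_convergence g₀ (fun n => hg₀.sub (hg n))
      (fun n => ae_of_all _ fun x => tsub_le_self) hfin <|
      (hlim.and (ae_lt_top hg₀ hfin)).mono fun x hx =>
        ENNReal.Tendsto.sub tendsto_const_nhds hx.1 (Or.inl hx.2.ne)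
    simpa using this
  have hW2sq : Tendsto (fun n => W2sq (𝔪.withDensity (g n)) (𝔪.withDensity g₀)) atTop (𝓝 0) :=
    tendsto_of_tendsto_of_tendsto_of_le_of_le tendsto_const_nhds
      (by simpa using ENNReal.Tendsto.const_mul hdefect (Or.inr (ENNReal.pow_ne_top hS.ediam_ne_top)))
      (fun n => zero_le)
      (fun n => W2sq_withDensity_le (hg n) hg₀ (hmass n) hfin (hgS n) hg₀S)
  simpa [W2] using hW2sq.ennrpow_const (1 / 2 : ℝ)

end Transport

section Convergence

variable {α : Type*} [MeasurableSpace α] {𝔪 : Measure α} {S : Set α}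

lemma rpow_le_max_of_mem_Icc {c C x : ℝ} (hc : 0 < c) (hx : x ∈ Icc c C) (p : ℝ) :
    x ^ p ≤ max (c ^ p) (C ^ p) := by
  rcases le_total 0 p with hp | hp
  · exact (Real.rpow_le_rpow (hc.le.trans hx.1) hx.2 hp).trans (le_max_right _ _)
  · exact (Real.rpow_le_rpow_of_nonpos hc hx.1 hp).trans (le_max_left _ _)

-- Dominated convergence: on `S` all the powers are bounded, since the densities stay in `[c, C]`.
lemma tendsto_integral_abs_rpow_sub (hS : MeasurableSet S) (hSfin : 𝔪 S ≠ ⊤)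
    {f : ℕ → α → ℝ} {f₀ : α → ℝ} (hf : ∀ n, Measurable (f n)) (hf₀ : Measurable f₀)
    (hfS : ∀ n, ∀ x ∉ S, f n x = 0) (hf₀S : ∀ x ∉ S, f₀ x = 0) {c C : ℝ} (hc : 0 < c)
    (hbd : ∀ n, ∀ᵐ x ∂𝔪.restrict S, f n x ∈ Icc c C) (hbd₀ : ∀ᵐ x ∂𝔪.restrict S, f₀ x ∈ Icc c C)
    (hlim : ∀ᵐ x ∂𝔪, Tendsto (fun n => f n x) atTop (𝓝 (f₀ x))) (p : ℝ) :
    Tendsto (fun n => ∫ x, |f n x ^ p - f₀ x ^ p| ∂𝔪) atTop (𝓝 0) := by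
  set B := max (c ^ p) (C ^ p)
  have hbd' : ∀ n, ∀ᵐ x ∂𝔪, x ∈ S → f n x ∈ Icc c C ∧ f₀ x ∈ Icc c C := fun n =>
    (ae_restrict_iff' hS).1 ((hbd n).and hbd₀)
  have hbound : ∀ n, ∀ᵐ x ∂𝔪, ‖|f n x ^ p - f₀ x ^ p|‖ ≤ S.indicator (fun _ => B + B) x := by
    intro n
    filter_upwards [hbd' n] with x hx
    by_cases hxS : x ∈ S
    · obtain ⟨hfx, hf₀x⟩ := hx hxS
      rw [indicator_of_mem hxS, Real.norm_eq_abs, abs_abs]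
      refine (abs_sub _ _).trans (add_le_add ?_ ?_) <;>
        rw [abs_of_nonneg (Real.rpow_nonneg (hc.le.trans ‹_ ∈ Icc c C›.1) p)]
      exacts [rpow_le_max_of_mem_Icc hc hfx p, rpow_le_max_of_mem_Icc hc hf₀x p]
    · simp [hfS n x hxS, hf₀S x hxS, hxS]
  have hlim' : ∀ᵐ x ∂𝔪, Tendsto (fun n => |f n x ^ p - f₀ x ^ p|) atTop (𝓝 0) := by
    filter_upwards [hlim, hbd' 0] with x hx hxS
    by_cases hx' : x ∈ S
    · have hpos : f₀ x ≠ 0 := (hc.trans_le (hxS hx').2.1).ne'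
      simpa using ((hx.rpow_const (p := p) (Or.inl hpos)).sub_const (f₀ x ^ p)).abs
    · simp [hfS _ x hx', hf₀S x hx']
  simpa using tendsto_integral_of_dominated_convergence _ (fun n => by fun_prop)
    ((integrable_indicator_iff hS).2 (integrableOn_const hSfin)) hbound hlim'

lemma ae_tendsto_of_abs_sub_le (hS : MeasurableSet S) {f : ℕ → α → ℝ} {f₀ : α → ℝ}
    (hfS : ∀ n, ∀ x ∉ S, f n x = 0) (hf₀S : ∀ x ∉ S, f₀ x = 0)
    (h : ∀ n, ∀ᵐ x ∂𝔪.restrict S, |f n x - f₀ x| ≤ 1 / (n + 1)) :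
    ∀ᵐ x ∂𝔪, Tendsto (fun n => f n x) atTop (𝓝 (f₀ x)) := by
  filter_upwards [(ae_restrict_iff' hS).1 (ae_all_iff.2 h)] with x hx
  by_cases hxS : x ∈ S
  · exact tendsto_iff_norm_sub_tendsto_zero.2 <| squeeze_zero (fun _ => norm_nonneg _) (hx hxS)
      tendsto_one_div_add_atTop_nhds_zero_nat
  · simp [hfS _ x hxS, hf₀S x hxS]

end Convergence

/-- every bounded probability measure `μ = ρ𝔪` is the `W₂`-limit of a
uniformly bounded sequence of step measures `μ_n = ρ_n 𝔪` with `ρ_n^{-1/N'} → ρ^{-1/N'}`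
in `L¹(𝔪)` for every `N' > 1`. -/
theorem stmt12 (𝔪 : Measure X) (hfin : ∀ s : Set X, IsBounded s → 𝔪 s < ⊤)
    (ρ : X → ℝ) (hρm : Measurable ρ) (S : Set X) (hS : MeasurableSet S)
    (hSb : IsBounded S) (c C : ℝ) (hc : 0 < c) (hcC : c < C)
    (hprob : IsProbabilityMeasure (𝔪.withDensity fun x => ENNReal.ofReal (ρ x)))
    (hsupp : ∀ x ∈ Sᶜ, ρ x = 0)
    (hbd : ∀ᵐ x ∂𝔪.restrict S, c ≤ ρ x ∧ ρ x ≤ C) :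
    ∃ (ρn : ℕ → X → ℝ) (c' C' : ℝ), 0 < c' ∧ c' ≤ C' ∧
      (∀ n, Measurable (ρn n)) ∧
      (∀ n, IsProbabilityMeasure (𝔪.withDensity fun x => ENNReal.ofReal (ρn n x))) ∧
      (∀ n, IsStepMeasure 𝔪 (𝔪.withDensity fun x => ENNReal.ofReal (ρn n x))) ∧
      (∀ n, ∀ x ∈ Sᶜ, ρn n x = 0) ∧
      (∀ n, ∀ᵐ x ∂𝔪.restrict S, c' ≤ ρn n x ∧ ρn n x ≤ C') ∧
      (∀ᵐ x ∂𝔪.restrict S, c' ≤ ρ x ∧ ρ x ≤ C') ∧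
      Tendsto (fun n => W2 (𝔪.withDensity fun x => ENNReal.ofReal (ρn n x))
        (𝔪.withDensity fun x => ENNReal.ofReal (ρ x))) atTop (nhds 0) ∧
      ∀ N' : ℝ, 1 < N' →
        Tendsto (fun n => ∫ x, |ρn n x ^ (-(1 / N')) - ρ x ^ (-(1 / N'))| ∂𝔪)
          atTop (nhds 0) := by
  have hSfin : 𝔪 S ≠ ⊤ := (hfin S hSb).ne
  choose ρn hmeas hzero hprobn hstep happrox using fun n : ℕ =>
    exists_step_approx hS hSfin hρm hsupp hc.le hbd (Nat.one_div_pos_of_nat (n := n))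
  have hbdn n : ∀ᵐ x ∂𝔪.restrict S, ρn n x ∈ Icc c C := (happrox n).mono fun _ hx => hx.1
  have hlim : ∀ᵐ x ∂𝔪, Tendsto (fun n => ρn n x) atTop (𝓝 (ρ x)) :=
    ae_tendsto_of_abs_sub_le hS hzero hsupp fun n => (happrox n).mono fun _ hx => hx.2
  refine ⟨ρn, c, C, hc, hcC.le, hmeas, hprobn, hstep, hzero, hbdn, hbd, ?_, fun N' _ => ?_⟩
  · exact tendsto_W2_withDensity hSb (fun n => (hmeas n).ennreal_ofReal) hρm.ennreal_ofReal
      hprobn hprob (fun n x hx => by simp [hzero n x hx]) (fun x hx => by simp [hsupp x hx])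
      (hlim.mono fun _ hx => ENNReal.tendsto_ofReal hx)
  · exact tendsto_integral_abs_rpow_sub hS hSfin hmeas hρm hzero hsupp hc hbdn hbd hlim _

end
end
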